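/- (Quadratic majorization for Gram-matrix terms.) Let W ∈ ℝ^{C×C} be symmetric with nonnegative entries, and let U ∈ ℝ^{d×C} have strictly positive entries. Then for every V ∈ ℝ^{d×C} with nonnegative entries, Tr(Vᵀ V W) ≤ Σ_{s,t} (U W)_{s,t} V_{s,t}² / U_{s,t}. -/
import Mathlib


open Matrix

lemma amgm_aux (x y p q w : ℝ) (hp : 0 < p) (hq : 0 < q) (hw : 0 ≤ w) :
    2 * (w * x * y) ≤ w * q * x ^ 2 / p + w * p * y ^ 2 / q := by
  rw [div_add_div _ _ (ne_of_gt hp) (ne_of_gt hq), le_div_iff₀ (by positivity)]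
  nlinarith [mul_nonneg hw (sq_nonneg (q * x - p * y))]

/-- Quadratic majorization for Gram-matrix terms:
for symmetric nonnegative `W`, strictly positive `U`, and nonnegative `V`,
`Tr(Vᵀ V W) ≤ Σ_{s,t} (UW)_{s,t} V_{s,t}² / U_{s,t}`. -/
theorem stmt12 {d C : ℕ} (W : Matrix (Fin C) (Fin C) ℝ)
    (hWsym : W.IsSymm) (hW : ∀ s t, 0 ≤ W s t)
    (U : Matrix (Fin d) (Fin C) ℝ) (hU : ∀ s t, 0 < U s t)
    (V : Matrix (Fin d) (Fin C) ℝ) (hV : ∀ s t, 0 ≤ V s t) :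
    (Vᵀ * V * W).trace ≤ ∑ s, ∑ t, (U * W) s t * (V s t) ^ 2 / U s t := by
  have hWsym' : ∀ a b, W a b = W b a := fun a b => hWsym.apply b a
  set g : Fin d → Fin C → Fin C → ℝ :=
    fun s t a => W a t * U s a * V s t ^ 2 / U s t with hg
  have key : ∀ s t a, 2 * (W a t * V s t * V s a) ≤ g s t a + g s a t := by
    intro s t a
    have := amgm_aux (V s t) (V s a) (U s t) (U s a) (W a t) (hU s t) (hU s a) (hW a t)
    calc 2 * (W a t * V s t * V s a) ≤ W a t * U s a * V s t ^ 2 / U s t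
          + W a t * U s t * V s a ^ 2 / U s a := this
      _ = g s t a + g s a t := by rw [hg]; dsimp only; rw [hWsym' a t]
  have hLHS : (Vᵀ * V * W).trace = ∑ s, ∑ t, ∑ a, W a t * V s t * V s a := by
    simp only [Matrix.trace, Matrix.diag, Matrix.mul_apply, Matrix.transpose_apply,
      Finset.sum_mul]
    have h : ∀ x : Fin C, (∑ x1, ∑ i, V i x * V i x1 * W x1 x)
        = ∑ i, ∑ x1, V i x * V i x1 * W x1 x := fun x => Finset.sum_comm
    simp only [h]
    rw [Finset.sum_comm]
    exact Finset.sum_congr rfl fun s _ => Finset.sum_congr rfl fun t _ =>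
      Finset.sum_congr rfl fun a _ => by ring
  have hRHS : ∀ s, (∑ t, (U * W) s t * (V s t) ^ 2 / U s t) = ∑ t, ∑ a, g s t a := by
    intro s
    refine Finset.sum_congr rfl fun t _ => ?_
    simp only [Matrix.mul_apply, hg, Finset.sum_mul, Finset.sum_div]
    exact Finset.sum_congr rfl fun a _ => by ring
  rw [hLHS]
  apply Finset.sum_le_sum
  intro s _
  rw [hRHS s]
  have h1 : ∑ t, ∑ a, 2 * (W a t * V s t * V s a) ≤ ∑ t, ∑ a, (g s t a + g s a t) :=
    Finset.sum_le_sum fun t _ => Finset.sum_le_sum fun a _ => key s t a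
  have h2 : ∑ t, ∑ a, 2 * (W a t * V s t * V s a)
      = 2 * ∑ t, ∑ a, W a t * V s t * V s a := by
    simp [Finset.mul_sum]
  have h3 : ∑ t, ∑ a, (g s t a + g s a t)
      = (∑ t, ∑ a, g s t a) + ∑ t, ∑ a, g s a t := by
    simp [Finset.sum_add_distrib]
  have h4 : (∑ t, ∑ a, g s a t) = ∑ t, ∑ a, g s t a := Finset.sum_comm
  linarith
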